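/- Let L be a positive integer. Let W ⊆ [L] be symmetric with respect to x ↦ L+1−x, let X¹, Y¹ ⊆ [L] satisfy X¹∩X̄¹ = ∅, Y¹∩Ȳ¹ = ∅ and X¹∪X̄¹ = Y¹∪Ȳ¹, where X̄¹ = {L+1−x : x∈X¹} and Ȳ¹ = {L+1−y : y∈Y¹}, with W disjoint from X¹∪X̄¹. Let C = {L+1, ..., L+γ} for a nonnegative integer γ, and let q be a nonnegative integer. Then (Σ_Z Δ(Z∪X¹∪W∪C)) · Δ(Y¹)·Δ(Y¹,C) = (Σ_Z Δ(Z∪Y¹∪W∪C)) · Δ(X¹)·Δ(X¹,C), where both sums range over all subsets Z ⊆ [L]∖(X¹∪X̄¹∪W) with |Z| = q that are symmetric with respect to x ↦ L+1−x. -/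
import Mathlib


/-- `Δ(S) = ∏_{s₁,s₂ ∈ S, s₁ < s₂} (s₂ - s₁)`. -/
def Dset (S : Finset ℤ) : ℤ :=
  ∏ x ∈ S, ∏ y ∈ S.filter (fun y => x < y), (y - x)

/-- `Δ(S,T) = ∏_{s ∈ S, t ∈ T} |t - s|`. -/
def Dpair (S T : Finset ℤ) : ℤ :=
  ∏ s ∈ S, ∏ t ∈ T, |t - s|

lemma Dpair_nonneg (A B : Finset ℤ) : 0 ≤ Dpair A B := by
  apply Finset.prod_nonneg; intro s _
  exact Finset.prod_nonneg fun t _ => abs_nonneg _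

lemma Dpair_comm (A B : Finset ℤ) : Dpair A B = Dpair B A := by
  rw [Dpair, Dpair, Finset.prod_comm]
  exact Finset.prod_congr rfl fun s _ => Finset.prod_congr rfl fun t _ => abs_sub_comm _ _

lemma Dpair_union_right (A B C : Finset ℤ) (h : Disjoint B C) :
    Dpair A (B ∪ C) = Dpair A B * Dpair A C := by
  rw [Dpair, Dpair, Dpair, ← Finset.prod_mul_distrib]
  exact Finset.prod_congr rfl fun s _ => Finset.prod_union h

lemma Dpair_union_left (A B C : Finset ℤ) (h : Disjoint A B) :
    Dpair (A ∪ B) C = Dpair A C * Dpair B C := by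
  rw [Dpair_comm, Dpair_comm A C, Dpair_comm B C]; exact Dpair_union_right _ _ _ h

lemma Dpair_image (c : ℤ) (A B : Finset ℤ) :
    Dpair (A.image (fun x => c - x)) (B.image (fun x => c - x)) = Dpair A B := by
  have hinj : Function.Injective (fun x : ℤ => c - x) := fun a b h => by
    simpa using h
  rw [Dpair, Dpair, Finset.prod_image (fun a _ b _ h => hinj h)]
  refine Finset.prod_congr rfl fun s _ => ?_
  rw [Finset.prod_image (fun a _ b _ h => hinj h)]
  refine Finset.prod_congr rfl fun t _ => ?_
  have : c - t - (c - s) = -(t - s) := by ring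
  rw [this, abs_neg]

lemma Dset_union (A B : Finset ℤ) (h : Disjoint A B) :
    Dset (A ∪ B) = Dset A * Dset B * Dpair A B := by
  classical
  have hfil : ∀ x : ℤ, (A ∪ B).filter (fun y => x < y)
      = A.filter (fun y => x < y) ∪ B.filter (fun y => x < y) :=
    fun x => Finset.filter_union _ _ _
  have hdisj : ∀ x : ℤ, Disjoint (A.filter (fun y => x < y)) (B.filter (fun y => x < y)) :=
    fun x => (h.mono (Finset.filter_subset _ _) (Finset.filter_subset _ _))
  have key : ∀ x : ℤ, (∏ y ∈ (A ∪ B).filter (fun y => x < y), (y - x))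
      = (∏ y ∈ A.filter (fun y => x < y), (y - x)) *
        (∏ y ∈ B.filter (fun y => x < y), (y - x)) := by
    intro x; rw [hfil x, Finset.prod_union (hdisj x)]
  rw [Dset, Finset.prod_congr rfl (fun x _ => key x), Finset.prod_union h,
    Finset.prod_mul_distrib, Finset.prod_mul_distrib]
  have cross : (∏ x ∈ A, ∏ y ∈ B.filter (fun y => x < y), (y - x)) *
      (∏ x ∈ B, ∏ y ∈ A.filter (fun y => x < y), (y - x)) = Dpair A B := by
    have h2 : (∏ x ∈ B, ∏ y ∈ A.filter (fun y => x < y), (y - x))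
        = ∏ x ∈ A, ∏ y ∈ B.filter (fun y => y < x), (x - y) := by
      refine (Finset.prod_comm' ?_).symm
      intro x y
      simp only [Finset.mem_filter]
      tauto
    rw [h2, ← Finset.prod_mul_distrib, Dpair]
    refine Finset.prod_congr rfl fun x hx => ?_
    rw [← Finset.prod_filter_mul_prod_filter_not B (fun y => x < y) (fun t => |t - x|)]
    congr 1
    · exact Finset.prod_congr rfl fun y hy => (abs_of_pos (by
        simp only [Finset.mem_filter] at hy; omega)).symm
    · rw [Finset.prod_congr (show B.filter (fun y => ¬ x < y) = B.filter (fun y => y < x) from ?_) fun y _ => rfl]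
      · refine Finset.prod_congr rfl fun y hy => ?_
        simp only [Finset.mem_filter] at hy
        rw [abs_of_neg (by omega)]; ring
      · apply Finset.filter_congr
        intro y hyB
        have hxy : y ≠ x := fun e => (Finset.disjoint_left.mp h hx (e ▸ hyB))
        simp only [not_lt]
        constructor
        · intro h'; omega
        · intro h'; omega
  rw [Dset, Dset, ← cross]; ring

lemma Dpair_eq_of_sym (c : ℤ) (S X1 X1b Y1 Y1b : Finset ℤ)
    (hS : S = S.image (fun z => c - z))
    (hX1b : X1b = X1.image (fun x => c - x)) (hY1b : Y1b = Y1.image (fun y => c - y))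
    (hX : Disjoint X1 X1b) (hY : Disjoint Y1 Y1b)
    (hXY : X1 ∪ X1b = Y1 ∪ Y1b) :
    Dpair X1 S = Dpair Y1 S := by
  have hXb : Dpair X1b S = Dpair X1 S := by
    rw [hX1b]
    calc Dpair (X1.image (fun x => c - x)) S
        = Dpair (X1.image (fun x => c - x)) (S.image (fun z => c - z)) := by rw [← hS]
      _ = Dpair X1 S := Dpair_image c X1 S
  have hYb : Dpair Y1b S = Dpair Y1 S := by
    rw [hY1b]
    calc Dpair (Y1.image (fun x => c - x)) S
        = Dpair (Y1.image (fun x => c - x)) (S.image (fun z => c - z)) := by rw [← hS]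
      _ = Dpair Y1 S := Dpair_image c Y1 S
  have hsq : Dpair X1 S ^ 2 = Dpair Y1 S ^ 2 := by
    have h1 : Dpair (X1 ∪ X1b) S = Dpair X1 S * Dpair X1b S := Dpair_union_left _ _ _ hX
    have h2 : Dpair (Y1 ∪ Y1b) S = Dpair Y1 S * Dpair Y1b S := Dpair_union_left _ _ _ hY
    rw [hXY] at h1
    rw [sq, sq]
    nth_rewrite 2 [← hXb]
    rw [← h1, h2, hYb]
  have := (sq_eq_sq_iff_abs_eq_abs _ _).mp hsq
  rwa [abs_of_nonneg (Dpair_nonneg _ _), abs_of_nonneg (Dpair_nonneg _ _)] at this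

theorem sum_identity_symmetric (L : ℕ) (hL : 0 < L)
    (W X1 Y1 : Finset ℤ) (γ q : ℕ)
    (hWL : W ⊆ Finset.Icc (1 : ℤ) L)
    (hW : W = W.image (fun w => (L : ℤ) + 1 - w))
    (X1b Y1b : Finset ℤ)
    (hX1b : X1b = X1.image (fun x => (L : ℤ) + 1 - x))
    (hY1b : Y1b = Y1.image (fun y => (L : ℤ) + 1 - y))
    (hX1L : X1 ⊆ Finset.Icc (1 : ℤ) L) (hY1L : Y1 ⊆ Finset.Icc (1 : ℤ) L)
    (hX : Disjoint X1 X1b) (hY : Disjoint Y1 Y1b)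
    (hXY : X1 ∪ X1b = Y1 ∪ Y1b)
    (hWX : Disjoint W (X1 ∪ X1b))
    (C : Finset ℤ) (hC : C = Finset.Icc ((L : ℤ) + 1) ((L : ℤ) + γ)) :
    (∑ Z ∈ (Finset.powersetCard q (Finset.Icc (1 : ℤ) L \ (X1 ∪ X1b ∪ W))).filter
        (fun Z => Z = Z.image (fun z => (L : ℤ) + 1 - z)),
        Dset (Z ∪ X1 ∪ W ∪ C)) * (Dset Y1 * Dpair Y1 C) =
    (∑ Z ∈ (Finset.powersetCard q (Finset.Icc (1 : ℤ) L \ (X1 ∪ X1b ∪ W))).filter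
        (fun Z => Z = Z.image (fun z => (L : ℤ) + 1 - z)),
        Dset (Z ∪ Y1 ∪ W ∪ C)) * (Dset X1 * Dpair X1 C) := by
  rw [Finset.sum_mul, Finset.sum_mul]
  refine Finset.sum_congr rfl fun Z hZ => ?_
  simp only [Finset.mem_filter, Finset.mem_powersetCard] at hZ
  obtain ⟨⟨hZsub, -⟩, hZsym⟩ := hZ
  -- basic disjointness facts
  have hY1sub : Y1 ⊆ X1 ∪ X1b := hXY ▸ Finset.subset_union_left
  have hCIcc : Disjoint (Finset.Icc (1 : ℤ) L) C := by
    rw [hC, Finset.disjoint_left]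
    intro a ha hb
    simp only [Finset.mem_Icc] at ha hb
    omega
  have hZIcc : Z ⊆ Finset.Icc (1 : ℤ) L :=
    hZsub.trans (Finset.sdiff_subset)
  have hZnot : ∀ a ∈ Z, a ∉ X1 ∪ X1b ∪ W := by
    intro a ha
    have := hZsub ha
    simp only [Finset.mem_sdiff] at this
    exact this.2
  have hZX1 : Disjoint Z X1 := Finset.disjoint_left.mpr fun a ha hb =>
    hZnot a ha (by simp [hb])
  have hZX1b : Disjoint Z X1b := Finset.disjoint_left.mpr fun a ha hb =>
    hZnot a ha (by simp [hb])
  have hZW : Disjoint Z W := Finset.disjoint_left.mpr fun a ha hb =>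
    hZnot a ha (by simp [hb])
  have hZY1 : Disjoint Z Y1 := Finset.disjoint_left.mpr fun a ha hb => by
    have := hY1sub hb
    simp only [Finset.mem_union] at this
    rcases this with h | h
    · exact Finset.disjoint_left.mp hZX1 ha h
    · exact Finset.disjoint_left.mp hZX1b ha h
  have hWX1 : Disjoint W X1 := hWX.mono_right Finset.subset_union_left
  have hWY1 : Disjoint W Y1 := (hXY ▸ hWX : Disjoint W (Y1 ∪ Y1b)).mono_right Finset.subset_union_left
  have hZWC : Disjoint (Z ∪ W) C :=
    Finset.disjoint_union_left.mpr ⟨hCIcc.mono_left hZIcc, hCIcc.mono_left hWL⟩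
  have hX1C : Disjoint X1 C := hCIcc.mono_left hX1L
  have hY1C : Disjoint Y1 C := hCIcc.mono_left hY1L
  have hX1rest : Disjoint X1 ((Z ∪ W) ∪ C) := by
    refine Finset.disjoint_union_right.mpr ⟨Finset.disjoint_union_right.mpr ⟨hZX1.symm, hWX1.symm⟩, hX1C⟩
  have hY1rest : Disjoint Y1 ((Z ∪ W) ∪ C) := by
    refine Finset.disjoint_union_right.mpr ⟨Finset.disjoint_union_right.mpr ⟨hZY1.symm, hWY1.symm⟩, hY1C⟩
  -- symmetry of Z ∪ W
  have hSsym : Z ∪ W = (Z ∪ W).image (fun z => (L : ℤ) + 1 - z) := by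
    rw [Finset.image_union, ← hZsym, ← hW]
  -- key: Dpair X1 (Z ∪ W) = Dpair Y1 (Z ∪ W)
  have hkey : Dpair X1 (Z ∪ W) = Dpair Y1 (Z ∪ W) :=
    Dpair_eq_of_sym ((L : ℤ) + 1) (Z ∪ W) X1 X1b Y1 Y1b hSsym hX1b hY1b hX hY hXY
  -- rewrite the unions
  have hXu : Z ∪ X1 ∪ W ∪ C = X1 ∪ ((Z ∪ W) ∪ C) := by
    ext a; simp only [Finset.mem_union]; tauto
  have hYu : Z ∪ Y1 ∪ W ∪ C = Y1 ∪ ((Z ∪ W) ∪ C) := by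
    ext a; simp only [Finset.mem_union]; tauto
  rw [hXu, hYu, Dset_union _ _ hX1rest, Dset_union _ _ hY1rest,
    Dpair_union_right _ _ _ hZWC, Dpair_union_right _ _ _ hZWC, hkey]
  ring
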